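/- Let J be a Euclidean Jordan algebra, c an idempotent, x ∈ J(c,1) and y ∈ J(c,0). Then the quadratic map satisfies P(x+y) = P(x) + 2(L(x)L(y) + L(y)L(x)) + P(y); moreover P(x+y) preserves each Peirce space J(c,λ) (λ = 1, 1/2, 0), acting as P(x) on J(c,1), as 2(L(x)L(y)+L(y)L(x)) on J(c,1/2), and as P(y) on J(c,0). -/

import Mathlib

/-!
The linearized Jordan identity shows that `L(u)` commutes with `L(c)` for `u ∈ J(c,1) ∪ J(c,0)`,
so such multiplication operators preserve every Peirce space. Hence `J(c,1) ∘ J(c,0) = 0`; in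
particular `x ∘ y = 0`, which splits `P(x+y)` as `P(x) + 2(L(x)L(y) + L(y)L(x)) + P(y)`, each
summand preserving the Peirce spaces. On `J(c,1)` the terms involving `y` vanish, on `J(c,0)`
those involving `x`, and on `J(c,1/2)` both `P(x)` and `P(y)` vanish by the linearized Jordan
identity with `c` inserted.
-/

open scoped RealInnerProductSpace

/-- A Euclidean Jordan algebra structure on a finite-dimensional real inner
product space: a commutative bilinear product satisfying the Jordan identity,
with unit `one`, such that the inner product is associative. -/
structure EJA (J : Type) [NormedAddCommGroup J] [InnerProductSpace ℝ J] : Type where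
  mul : J →ₗ[ℝ] J →ₗ[ℝ] J
  comm : ∀ x y : J, mul x y = mul y x
  jordan : ∀ x y : J, mul (mul x y) (mul x x) = mul x (mul y (mul x x))
  one : J
  one_mul : ∀ x : J, mul one x = x
  assoc_inner : ∀ x y z : J, ⟪mul x y, z⟫ = ⟪y, mul x z⟫

variable {J : Type} [NormedAddCommGroup J] [InnerProductSpace ℝ J] [FiniteDimensional ℝ J]

/-- The Peirce `μ`-eigenspace of the idempotent `c`. -/
noncomputable def EJA.peirce (A : EJA J) (c : J) (μ : ℝ) : Submodule ℝ J :=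
  Module.End.eigenspace (A.mul c : Module.End ℝ J) μ

/-- A complete system of orthogonal idempotents. -/
def EJA.IsCSOI (A : EJA J) {k : ℕ} (c : Fin k → J) : Prop :=
  (∀ j, A.mul (c j) (c j) = c j) ∧ (∀ i j, i ≠ j → A.mul (c i) (c j) = 0) ∧
    (∑ j, c j) = A.one

/-- `y` is the Jordan inverse of `x`:  `x∘y = e` and `x²∘y = x`. -/
def EJA.IsInv (A : EJA J) (x y : J) : Prop :=
  A.mul x y = A.one ∧ A.mul (A.mul x x) y = x

/-- The quadratic representation `P(z) = 2L(z)² - L(z²)`. -/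
noncomputable def EJA.Pquad (A : EJA J) (z : J) : J →ₗ[ℝ] J :=
  2 • (A.mul z ∘ₗ A.mul z) - A.mul (A.mul z z)

section

variable {J : Type} [NormedAddCommGroup J] [InnerProductSpace ℝ J]

namespace EJA

variable (A : EJA J) {c : J}

lemma mem_peirce_iff {μ : ℝ} {v : J} : v ∈ A.peirce c μ ↔ A.mul c v = μ • v :=
  Module.End.mem_eigenspace_iff

lemma jordan_linearized (x z v : J) :
    A.mul (A.mul z v) (A.mul x x) + 2 • A.mul (A.mul x v) (A.mul x z)
      = A.mul z (A.mul v (A.mul x x)) + 2 • A.mul x (A.mul v (A.mul x z)) := by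
  have hadd := A.jordan (x + z) v
  have hsub := A.jordan (x - z) v
  have hz := A.jordan z v
  simp only [map_add, map_sub, LinearMap.add_apply, LinearMap.sub_apply, A.comm z x]
    at hadd hsub
  linear_combination (norm := module) (2:ℝ)⁻¹ • hadd - (2:ℝ)⁻¹ • hsub - hz

lemma commute_mul_of_mem_peirce (hc : A.mul c c = c) {u : J}
    (hu : u ∈ A.peirce c 1 ∨ u ∈ A.peirce c 0) : Commute (A.mul c) (A.mul u) := by
  refine LinearMap.ext fun v => ?_
  have h := A.jordan_linearized c u v
  rw [hc] at h
  simp only [Module.End.mul_apply]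
  rcases hu with hu | hu
  · rw [A.mem_peirce_iff, one_smul] at hu
    rw [hu, A.comm (A.mul u v) c, A.comm v c, A.comm (A.mul c v) u, A.comm v u] at h
    linear_combination (norm := module) -h
  · rw [A.mem_peirce_iff, zero_smul] at hu
    simp only [hu, map_zero, smul_zero, add_zero] at h
    rwa [A.comm (A.mul u v) c, A.comm v c] at h

lemma mul_mem_peirce (hc : A.mul c c = c) {u v : J} (hu : u ∈ A.peirce c 1 ∨ u ∈ A.peirce c 0)
    {μ : ℝ} (hv : v ∈ A.peirce c μ) : A.mul u v ∈ A.peirce c μ := by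
  rw [A.mem_peirce_iff] at hv ⊢
  rw [← Module.End.mul_apply, A.commute_mul_of_mem_peirce hc hu, Module.End.mul_apply, hv,
    map_smul]

lemma mul_self_mem_peirce (hc : A.mul c c = c) {u : J}
    (hu : u ∈ A.peirce c 1 ∨ u ∈ A.peirce c 0) :
    A.mul u u ∈ A.peirce c 1 ∨ A.mul u u ∈ A.peirce c 0 :=
  hu.imp (A.mul_mem_peirce hc hu) (A.mul_mem_peirce hc hu)

lemma mul_eq_zero_of_mem_peirce_one_of_mem_peirce_zero (hc : A.mul c c = c) {a b : J}
    (ha : a ∈ A.peirce c 1) (hb : b ∈ A.peirce c 0) : A.mul a b = 0 := by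
  -- `a ∘ b = b ∘ a` lies in both `J(c,1)` and `J(c,0)`.
  have h1 := A.mul_mem_peirce hc (.inr hb) ha
  have h0 := A.mul_mem_peirce hc (.inl ha) hb
  rw [A.mem_peirce_iff, one_smul, A.comm b a] at h1
  rw [A.mem_peirce_iff, zero_smul] at h0
  rw [← h1, h0]

lemma mul_eq_zero_of_mem_peirce_zero_of_mem_peirce_one (hc : A.mul c c = c) {a b : J}
    (ha : a ∈ A.peirce c 0) (hb : b ∈ A.peirce c 1) : A.mul a b = 0 := by
  rw [A.comm]
  exact A.mul_eq_zero_of_mem_peirce_one_of_mem_peirce_zero hc hb ha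

lemma Pquad_apply (z v : J) : A.Pquad z v = 2 • A.mul z (A.mul z v) - A.mul (A.mul z z) v :=
  rfl

lemma Pquad_add_of_mul_eq_zero {x y : J} (hxy : A.mul x y = 0) :
    A.Pquad (x + y)
      = A.Pquad x + 2 • (A.mul x ∘ₗ A.mul y + A.mul y ∘ₗ A.mul x) + A.Pquad y := by
  ext v
  simp only [Pquad_apply, LinearMap.add_apply, LinearMap.smul_apply, LinearMap.comp_apply,
    map_add, hxy, A.comm y x, add_zero, zero_add]
  abel

lemma Pquad_apply_mem_peirce (hc : A.mul c c = c) {u v : J}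
    (hu : u ∈ A.peirce c 1 ∨ u ∈ A.peirce c 0) {μ : ℝ} (hv : v ∈ A.peirce c μ) :
    A.Pquad u v ∈ A.peirce c μ :=
  sub_mem (nsmul_mem (A.mul_mem_peirce hc hu (A.mul_mem_peirce hc hu hv)) 2)
    (A.mul_mem_peirce hc (A.mul_self_mem_peirce hc hu) hv)

lemma Pquad_apply_eq_zero_of_mem_peirce_one_of_mem_peirce_zero (hc : A.mul c c = c) {a b : J}
    (ha : a ∈ A.peirce c 1) (hb : b ∈ A.peirce c 0) : A.Pquad a b = 0 := by
  have haa : A.mul a a ∈ A.peirce c 1 := A.mul_mem_peirce hc (.inl ha) ha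
  rw [Pquad_apply, A.mul_eq_zero_of_mem_peirce_one_of_mem_peirce_zero hc ha hb,
    A.mul_eq_zero_of_mem_peirce_one_of_mem_peirce_zero hc haa hb, map_zero, smul_zero, sub_zero]

lemma Pquad_apply_eq_zero_of_mem_peirce_zero_of_mem_peirce_one (hc : A.mul c c = c) {a b : J}
    (ha : a ∈ A.peirce c 0) (hb : b ∈ A.peirce c 1) : A.Pquad a b = 0 := by
  have haa : A.mul a a ∈ A.peirce c 0 := A.mul_mem_peirce hc (.inr ha) ha
  rw [Pquad_apply, A.mul_eq_zero_of_mem_peirce_zero_of_mem_peirce_one hc ha hb,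
    A.mul_eq_zero_of_mem_peirce_zero_of_mem_peirce_one hc haa hb, map_zero, smul_zero, sub_zero]

lemma Pquad_apply_eq_zero_of_mem_peirce_half (hc : A.mul c c = c) {u v : J}
    (hu : u ∈ A.peirce c 1 ∨ u ∈ A.peirce c 0) (hv : v ∈ A.peirce c (1 / 2)) :
    A.Pquad u v = 0 := by
  have huv := A.mul_mem_peirce hc hu hv
  have h := A.jordan_linearized u v c
  rw [A.mem_peirce_iff] at hv huv
  rw [A.comm v c, hv, A.comm u c, huv] at h
  rw [Pquad_apply, A.comm (A.mul u u) v]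
  rcases hu with hu | hu
  · have huu := A.mul_mem_peirce hc (.inl hu) hu
    rw [A.mem_peirce_iff, one_smul] at hu huu
    rw [hu, huu] at h
    simp only [map_smul, LinearMap.smul_apply] at h
    linear_combination (norm := module) (2:ℝ) • h
  · have huu := A.mul_mem_peirce hc (.inr hu) hu
    rw [A.mem_peirce_iff, zero_smul] at hu huu
    rw [hu, huu] at h
    simp only [map_smul, map_zero, LinearMap.smul_apply, LinearMap.zero_apply, smul_zero,
      zero_add, add_zero] at h
    linear_combination (norm := module) (-2:ℝ) • h

lemma Pquad_add_apply_mem_peirce (hc : A.mul c c = c) {x y v : J} (hx : x ∈ A.peirce c 1)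
    (hy : y ∈ A.peirce c 0) {μ : ℝ} (hv : v ∈ A.peirce c μ) :
    A.Pquad (x + y) v ∈ A.peirce c μ := by
  rw [A.Pquad_add_of_mul_eq_zero (A.mul_eq_zero_of_mem_peirce_one_of_mem_peirce_zero hc hx hy)]
  have hxyv := A.mul_mem_peirce hc (.inl hx) (A.mul_mem_peirce hc (.inr hy) hv)
  have hyxv := A.mul_mem_peirce hc (.inr hy) (A.mul_mem_peirce hc (.inl hx) hv)
  simp only [LinearMap.add_apply, LinearMap.smul_apply, LinearMap.comp_apply]
  exact add_mem (add_mem (A.Pquad_apply_mem_peirce hc (.inl hx) hv)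
    (nsmul_mem (add_mem hxyv hyxv) 2)) (A.Pquad_apply_mem_peirce hc (.inr hy) hv)

end EJA

end

/-- For an idempotent `c`, `x ∈ J(c,1)` and `y ∈ J(c,0)`:
`P(x+y) = P(x) + 2(L(x)L(y)+L(y)L(x)) + P(y)`, and `P(x+y)` preserves each
Peirce space, acting as `P(x)` on `J(c,1)`, as `2(L(x)L(y)+L(y)L(x))` on
`J(c,1/2)` and as `P(y)` on `J(c,0)`. -/
theorem stmt7 (A : EJA J) (c : J) (hc : A.mul c c = c) (x y : J)
    (hx : x ∈ A.peirce c 1) (hy : y ∈ A.peirce c 0) :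
    A.Pquad (x + y)
      = A.Pquad x + 2 • (A.mul x ∘ₗ A.mul y + A.mul y ∘ₗ A.mul x) + A.Pquad y ∧
    (∀ v ∈ A.peirce c 1, A.Pquad (x + y) v ∈ A.peirce c 1 ∧
        A.Pquad (x + y) v = A.Pquad x v) ∧
    (∀ v ∈ A.peirce c (1 / 2), A.Pquad (x + y) v ∈ A.peirce c (1 / 2) ∧
        A.Pquad (x + y) v = 2 • (A.mul x (A.mul y v) + A.mul y (A.mul x v))) ∧
    (∀ v ∈ A.peirce c 0, A.Pquad (x + y) v ∈ A.peirce c 0 ∧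
        A.Pquad (x + y) v = A.Pquad y v) := by
  have hP := A.Pquad_add_of_mul_eq_zero
    (A.mul_eq_zero_of_mem_peirce_one_of_mem_peirce_zero hc hx hy)
  have hPv (v : J) : A.Pquad (x + y) v
      = A.Pquad x v + 2 • (A.mul x (A.mul y v) + A.mul y (A.mul x v)) + A.Pquad y v := by
    rw [hP]; rfl
  refine ⟨hP, fun v hv => ⟨A.Pquad_add_apply_mem_peirce hc hx hy hv, ?_⟩,
    fun v hv => ⟨A.Pquad_add_apply_mem_peirce hc hx hy hv, ?_⟩,
    fun v hv => ⟨A.Pquad_add_apply_mem_peirce hc hx hy hv, ?_⟩⟩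
  · have hyv := A.mul_eq_zero_of_mem_peirce_zero_of_mem_peirce_one hc hy hv
    have hyxv := A.mul_eq_zero_of_mem_peirce_zero_of_mem_peirce_one hc hy
      (A.mul_mem_peirce hc (.inl hx) hv)
    simp [hPv, hyv, hyxv, A.Pquad_apply_eq_zero_of_mem_peirce_zero_of_mem_peirce_one hc hy hv]
  · rw [hPv, A.Pquad_apply_eq_zero_of_mem_peirce_half hc (.inl hx) hv,
      A.Pquad_apply_eq_zero_of_mem_peirce_half hc (.inr hy) hv, zero_add, add_zero]
  · have hxv := A.mul_eq_zero_of_mem_peirce_one_of_mem_peirce_zero hc hx hv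
    have hxyv := A.mul_eq_zero_of_mem_peirce_one_of_mem_peirce_zero hc hx
      (A.mul_mem_peirce hc (.inr hy) hv)
    simp [hPv, hxv, hxyv, A.Pquad_apply_eq_zero_of_mem_peirce_one_of_mem_peirce_zero hc hx hv]
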